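/- arXiv:1907.11209 — 2 statements merged into one kernel-verified Lean document; each statement's English description precedes it below -/
import Mathlib

section
/- The integrality gap of the vertex cover LP relaxation for a finite graph G with at least one edge equals 2 − 2/χ^f(G), i.e., ρ(G) = sup over nonnegative cost functions c (with positive LP value) of (min integral vertex cover cost)/(min LP cost) = 2 − 2/χ^f(G). -/
open Finset

def IsVC {V : Type*} (G : SimpleGraph V) (S : Set V) : Prop :=
  ∀ ⦃u v⦄, G.Adj u v → u ∈ S ∨ v ∈ S

def IsIndep {V : Type*} (G : SimpleGraph V) (S : Set V) : Prop :=
  ∀ ⦃u⦄, u ∈ S → ∀ ⦃v⦄, v ∈ S → ¬ G.Adj u v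

def lpPoly {V : Type*} (G : SimpleGraph V) : Set (V → ℝ) :=
  {x | (∀ v, 0 ≤ x v) ∧ ∀ ⦃u v⦄, G.Adj u v → 1 ≤ x u + x v}

/-- Optimal value of the fractional coloring LP of the subgraph of `G` induced on `s`:
weights on independent sets contained in `s` covering every vertex of `s`. -/
noncomputable def fracChromOn {V : Type*} [Fintype V] [DecidableEq V]
    (G : SimpleGraph V) (s : Set V) : ℝ :=
  sInf {t | ∃ y : Finset V → ℝ, (∀ U, 0 ≤ y U) ∧
    (∀ U, y U ≠ 0 → IsIndep G ↑U ∧ ↑U ⊆ s) ∧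
    (∀ v ∈ s, 1 ≤ ∑ U : Finset V, if v ∈ U then y U else 0) ∧
    t = ∑ U : Finset V, y U}

/-- Fractional chromatic number of `G`. -/
noncomputable def fracChrom {V : Type*} [Fintype V] [DecidableEq V]
    (G : SimpleGraph V) : ℝ :=
  fracChromOn G Set.univ

/-- Optimal value of the vertex cover LP relaxation under cost `c`. -/
noncomputable def lpVal {V : Type*} [Fintype V] (G : SimpleGraph V) (c : V → ℝ) : ℝ :=
  sInf {t | ∃ x ∈ lpPoly G, t = ∑ v, c v * x v}

/-- Minimum cost of an integral vertex cover under cost `c`. -/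
noncomputable def ipVal {V : Type*} [Fintype V] [DecidableEq V]
    (G : SimpleGraph V) (c : V → ℝ) : ℝ :=
  sInf {t | ∃ S : Finset V, IsVC G ↑S ∧ t = ∑ v ∈ S, c v}

/-- Integrality gap of the vertex cover LP relaxation. -/
noncomputable def gap {V : Type*} [Fintype V] [DecidableEq V] (G : SimpleGraph V) : ℝ :=
  sSup {r | ∃ c : V → ℝ, (∀ v, 0 ≤ c v) ∧ 0 < lpVal G c ∧ r = ipVal G c / lpVal G c}

/-!
Upper bound. Scaling the coordinates of `x ∈ P(G)` that lie in `(0, 1)` towards `1/2` stays in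
`P(G)` until one of them reaches `0` or `1`, and the cost is affine in the scaling factor, so some
point of `P(G)` with coordinates in `{0, 1/2} ∪ [1, ∞)` is no more expensive than `x`. For such
an `x`, put `V₁ = {x ≥ 1}` and `V½ = {x = 1/2}`; each independent set `U` yields the vertex cover
`V₁ ∪ (V½ \ U)`. Averaging over a fractional coloring `y` of weight `t` saves at least
`c(V½) / t`, whence `t · ipVal ≤ 2 (t - 1) · c(x)`, i.e. `ipVal ≤ (2 - 2/t) · lpVal`.

Lower bound. Separating `𝟙` from the vectors dominated by `t · (convex hull of independent-set
indicators)`, for `t < χ^f(G)`, yields a fractional clique `c` (weight at most `1` on every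
independent set) of total weight `C > t`. The complement of a vertex cover is independent, so
`ipVal ≥ C - 1`, while `x ≡ 1/2` gives `lpVal ≤ C / 2`; the ratio is at least `2 - 2/C`.
-/

lemma sum_union_sdiff_of_disjoint {V : Type*} [DecidableEq V] {c : V → ℝ} {A B U : Finset V}
    (hAB : Disjoint A B) :
    ∑ v ∈ A ∪ (B \ U), c v = ∑ v ∈ A, c v + ∑ v ∈ B, c v - ∑ v ∈ B ∩ U, c v := by
  rw [sum_union (hAB.mono_right sdiff_subset), ← sum_inter_add_sum_sdiff B U c]
  ring

lemma isIndep_singleton {V : Type*} (G : SimpleGraph V) (a : V) :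
    IsIndep G ↑({a} : Finset V) := by
  intro x hx y hy
  rw [coe_singleton, Set.mem_singleton_iff] at hx hy
  subst hx hy
  exact G.loopless.irrefl _

section FracColoring

variable {V : Type*} [Fintype V] [DecidableEq V] (G : SimpleGraph V)

def IsFracColoring (y : Finset V → ℝ) : Prop :=
  (∀ U, 0 ≤ y U) ∧ (∀ U, y U ≠ 0 → IsIndep G ↑U) ∧
    ∀ v, 1 ≤ ∑ U : Finset V, if v ∈ U then y U else 0

lemma fracChrom_eq_sInf :
    fracChrom G = sInf {t | ∃ y, IsFracColoring G y ∧ t = ∑ U, y U} := by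
  simp [fracChrom, fracChromOn, IsFracColoring, and_assoc]

lemma isFracColoring_singletons : IsFracColoring G fun U => if U.card = 1 then 1 else 0 := by
  refine ⟨fun U => by positivity, fun U hU => ?_, fun v => ?_⟩
  · have hcard : U.card = 1 := by by_contra h; simp [h] at hU
    obtain ⟨a, rfl⟩ := card_eq_one.mp hcard
    exact isIndep_singleton G a
  · rw [sum_eq_single {v} (fun U _ hU => ?_) (by simp)]
    · simp
    dsimp only
    split_ifs with hv hcard
    · obtain ⟨a, rfl⟩ := card_eq_one.mp hcard
      exact absurd (by rw [mem_singleton.mp hv]) hU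
    all_goals rfl

lemma fracChrom_le_sum {y : Finset V → ℝ} (hy : IsFracColoring G y) :
    fracChrom G ≤ ∑ U, y U := by
  rw [fracChrom_eq_sInf]
  refine csInf_le ⟨0, ?_⟩ ⟨y, hy, rfl⟩
  rintro _ ⟨z, hz, rfl⟩
  exact sum_nonneg fun U _ => hz.1 U

lemma le_fracChrom {b : ℝ} (h : ∀ y, IsFracColoring G y → b ≤ ∑ U, y U) :
    b ≤ fracChrom G := by
  rw [fracChrom_eq_sInf]
  refine le_csInf ⟨_, _, isFracColoring_singletons G, rfl⟩ ?_
  rintro _ ⟨y, hy, rfl⟩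
  exact h y hy

lemma le_fracChrom_mul {p q : ℝ} (h : ∀ y, IsFracColoring G y → p ≤ (∑ U, y U) * q) :
    p ≤ fracChrom G * q := by
  rcases lt_or_ge 0 q with hq | hq
  · rw [← div_le_iff₀ hq]
    exact le_fracChrom G fun y hy => (div_le_iff₀ hq).mpr (h y hy)
  · have hy := isFracColoring_singletons G
    exact (h _ hy).trans (mul_le_mul_of_nonpos_right (fracChrom_le_sum G hy) hq)

lemma two_le_sum_of_isFracColoring (hE : ∃ u v, G.Adj u v) {y : Finset V → ℝ}
    (hy : IsFracColoring G y) : 2 ≤ ∑ U, y U := by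
  obtain ⟨u, v, huv⟩ := hE
  have hUuv : ∀ U : Finset V,
      ((if u ∈ U then y U else 0) + if v ∈ U then y U else 0) ≤ y U := by
    intro U
    by_cases hyU : y U = 0
    · simp [hyU]
    have hind := hy.2.1 U hyU
    split_ifs with hu hv <;> first
      | exact absurd huv (hind (mem_coe.mpr hu) (mem_coe.mpr hv))
      | linarith [hy.1 U]
  calc (2 : ℝ) ≤ (∑ U, if u ∈ U then y U else 0) + ∑ U, if v ∈ U then y U else 0 := by
        linarith [hy.2.2 u, hy.2.2 v]
    _ ≤ ∑ U, y U := by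
        rw [← sum_add_distrib]
        exact sum_le_sum fun U _ => hUuv U

lemma two_le_fracChrom (hE : ∃ u v, G.Adj u v) : 2 ≤ fracChrom G :=
  le_fracChrom G fun _ hy => two_le_sum_of_isFracColoring G hE hy

end FracColoring

section CoverValues

variable {V : Type*} [Fintype V] (G : SimpleGraph V) (c : V → ℝ)

lemma lpVal_le (hc : ∀ v, 0 ≤ c v) {x : V → ℝ} (hx : x ∈ lpPoly G) :
    lpVal G c ≤ ∑ v, c v * x v := by
  refine csInf_le ⟨0, ?_⟩ ⟨x, hx, rfl⟩
  rintro _ ⟨z, hz, rfl⟩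
  exact sum_nonneg fun v _ => mul_nonneg (hc v) (hz.1 v)

lemma le_lpVal {b : ℝ} (h : ∀ x ∈ lpPoly G, b ≤ ∑ v, c v * x v) : b ≤ lpVal G c := by
  refine le_csInf ⟨_, fun _ => 1, ⟨fun _ => zero_le_one, fun _ _ _ => by norm_num⟩, rfl⟩ ?_
  rintro _ ⟨x, hx, rfl⟩
  exact h x hx

lemma lpVal_le_half_sum (hc : ∀ v, 0 ≤ c v) : lpVal G c ≤ (∑ v, c v) / 2 := by
  have hhalf : (fun _ => 1 / 2 : V → ℝ) ∈ lpPoly G :=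
    ⟨fun _ => by norm_num, fun _ _ _ => by norm_num⟩
  calc lpVal G c ≤ ∑ v, c v * (1 / 2) := lpVal_le G c hc hhalf
    _ = (∑ v, c v) / 2 := by rw [← sum_mul]; ring

variable [DecidableEq V]

lemma ipVal_le {S : Finset V} (hS : IsVC G ↑S) : ipVal G c ≤ ∑ v ∈ S, c v := by
  refine csInf_le ((Set.finite_range fun S : Finset V => ∑ v ∈ S, c v).bddBelow.mono ?_)
    ⟨S, hS, rfl⟩
  rintro _ ⟨T, -, rfl⟩
  exact ⟨T, rfl⟩

lemma le_ipVal {b : ℝ} (h : ∀ S : Finset V, IsVC G ↑S → b ≤ ∑ v ∈ S, c v) :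
    b ≤ ipVal G c := by
  refine le_csInf ⟨_, univ, fun u _ _ => Or.inl (mem_coe.mpr (mem_univ u)), rfl⟩ ?_
  rintro _ ⟨S, hS, rfl⟩
  exact h S hS

end CoverValues

section HalfIntegral

variable {V : Type*} {G : SimpleGraph V}

noncomputable def towardHalf (x : V → ℝ) (s : ℝ) (v : V) : ℝ :=
  if 0 < x v ∧ x v < 1 then 1 / 2 + s * (x v - 1 / 2) else x v

lemma towardHalf_zero_eq (x : V → ℝ) (hx : ∀ v, 0 ≤ x v) (v : V) :
    towardHalf x 0 v = 0 ∨ towardHalf x 0 v = 1 / 2 ∨ 1 ≤ towardHalf x 0 v := by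
  unfold towardHalf
  split_ifs with h
  · norm_num
  · rcases not_and_or.mp h with h | h
    · exact Or.inl (le_antisymm (not_lt.mp h) (hx v))
    · exact Or.inr (Or.inr (not_lt.mp h))

lemma towardHalf_mem_lpPoly {x : V → ℝ} (hx : x ∈ lpPoly G) {s : ℝ} (hs : 0 ≤ s)
    (hs' : ∀ v, 0 < x v → x v < 1 → s * |x v - 1 / 2| ≤ 1 / 2) :
    towardHalf x s ∈ lpPoly G := by
  have hmoved : ∀ v, 0 < x v → x v < 1 → 0 ≤ 1 / 2 + s * (x v - 1 / 2) := fun v h0 h1 => by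
    nlinarith [hs' v h0 h1, mul_le_mul_of_nonneg_left (neg_abs_le (x v - 1 / 2)) hs]
  refine ⟨fun v => ?_, fun u v huv => ?_⟩
  · unfold towardHalf
    split_ifs with h
    exacts [hmoved v h.1 h.2, hx.1 v]
  · have hedge := hx.2 huv
    unfold towardHalf
    split_ifs with hu hv hv
    · nlinarith
    · have : 1 ≤ x v := by by_contra! h; exact hv ⟨by linarith, h⟩
      linarith [hmoved u hu.1 hu.2]
    · have : 1 ≤ x u := by by_contra! h; exact hu ⟨by linarith, h⟩
      linarith [hmoved v hv.1 hv.2]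
    · exact hedge

variable [Fintype V]

lemma card_frac_towardHalf_lt {x : V → ℝ} {s : ℝ} {v₀ : V} (hv₀ : 0 < x v₀ ∧ x v₀ < 1)
    (hs : s * |x v₀ - 1 / 2| = 1 / 2) :
    #{v | 0 < towardHalf x s v ∧ towardHalf x s v < 1} < #{v | 0 < x v ∧ x v < 1} := by
  refine card_lt_card ((ssubset_iff_of_subset fun v hv => ?_).mpr ⟨v₀, ?_, ?_⟩)
  · simp only [mem_filter, mem_univ, true_and] at hv ⊢
    by_contra h
    rw [towardHalf, if_neg h] at hv
    exact h hv
  · exact mem_filter.mpr ⟨mem_univ v₀, hv₀⟩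
  · have hpm : s * (x v₀ - 1 / 2) = 1 / 2 ∨ s * (x v₀ - 1 / 2) = -(1 / 2) := by
      rcases abs_cases (x v₀ - 1 / 2) with ⟨h, -⟩ | ⟨h, -⟩ <;> rw [h] at hs
      exacts [Or.inl hs, Or.inr (by linarith)]
    rw [mem_filter, towardHalf, if_pos hv₀]
    rintro ⟨-, h0, h1⟩
    rcases hpm with h | h <;> linarith

lemma sum_mul_eq_towardHalf (c x : V → ℝ) {m : ℝ} (hm : m ≠ 0) :
    ∑ v, c v * x v = (1 - 2 * m) * ∑ v, c v * towardHalf x 0 v +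
      2 * m * ∑ v, c v * towardHalf x (1 / (2 * m)) v := by
  rw [mul_sum, mul_sum, ← sum_add_distrib]
  refine sum_congr rfl fun v _ => ?_
  unfold towardHalf
  split_ifs
  · field_simp
    ring
  · ring

lemma exists_halfIntegral_le (c : V → ℝ) {x : V → ℝ} (hx : x ∈ lpPoly G) :
    ∃ x' ∈ lpPoly G, (∀ v, x' v = 0 ∨ x' v = 1 / 2 ∨ 1 ≤ x' v) ∧
      ∑ v, c v * x' v ≤ ∑ v, c v * x v := by
  induction hn : #{v | 0 < x v ∧ x v < 1} using Nat.strong_induction_on generalizing x with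
  | _ n ih =>
  by_cases hhalf : ∀ v, x v = 0 ∨ x v = 1 / 2 ∨ 1 ≤ x v
  · exact ⟨x, hx, hhalf, le_rfl⟩
  obtain ⟨v₁, hv₁⟩ := not_forall.mp hhalf
  simp only [not_or, not_le] at hv₁
  have hF : ({v | 0 < x v ∧ x v < 1} : Finset V).Nonempty :=
    ⟨v₁, mem_filter.mpr ⟨mem_univ _, lt_of_le_of_ne (hx.1 v₁) (Ne.symm hv₁.1), hv₁.2.2⟩⟩
  obtain ⟨v₀, hv₀, hmax⟩ := exists_max_image _ (fun v => |x v - 1 / 2|) hF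
  simp only [mem_filter, mem_univ, true_and] at hv₀ hmax
  set m := |x v₀ - 1 / 2|
  have hm0 : 0 < m := (abs_pos.mpr (sub_ne_zero.mpr hv₁.2.1)).trans_le
    (hmax v₁ ⟨lt_of_le_of_ne (hx.1 v₁) (Ne.symm hv₁.1), hv₁.2.2⟩)
  have hm : m < 1 / 2 := abs_sub_lt_iff.mpr ⟨by linarith [hv₀.2], by linarith [hv₀.1]⟩
  rcases le_or_gt (∑ v, c v * towardHalf x 0 v) (∑ v, c v * x v) with h0 | h0
  · exact ⟨towardHalf x 0, towardHalf_mem_lpPoly hx le_rfl (by simp),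
      towardHalf_zero_eq x hx.1, h0⟩
  have hfar : towardHalf x (1 / (2 * m)) ∈ lpPoly G := by
    refine towardHalf_mem_lpPoly hx (by positivity) fun v h0 h1 => ?_
    rw [div_mul_eq_mul_div, one_mul, div_le_iff₀ (by positivity)]
    linarith [hmax v ⟨h0, h1⟩]
  have hcard := card_frac_towardHalf_lt hv₀ (show 1 / (2 * m) * m = 1 / 2 by field_simp)
  obtain ⟨x', hx', hhalf', hcost⟩ := ih _ (hn ▸ hcard) hfar rfl
  refine ⟨x', hx', hhalf', hcost.trans ?_⟩
  -- `x` is a convex combination of the two ends, and the end `s = 0` costs more than `x`.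
  have hsplit := sum_mul_eq_towardHalf c x hm0.ne'
  nlinarith

end HalfIntegral

section UpperBound

variable {V : Type*} [Fintype V] [DecidableEq V] (G : SimpleGraph V) {c : V → ℝ}

lemma isVC_union_sdiff {x : V → ℝ} (hx : x ∈ lpPoly G)
    (hhalf : ∀ v, x v = 0 ∨ x v = 1 / 2 ∨ 1 ≤ x v) {U : Finset V} (hU : IsIndep G ↑U) :
    IsVC G ↑(({v | 1 ≤ x v} : Finset V) ∪ (({v | x v = 1 / 2} : Finset V) \ U)) := by
  intro a b hab
  have hedge := hx.2 hab
  simp only [coe_union, coe_filter, coe_sdiff, Set.mem_union, Set.mem_ofPred_eq, Set.mem_sdiff,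
    mem_univ, true_and, mem_coe]
  by_cases ha1 : 1 ≤ x a
  · exact Or.inl (Or.inl ha1)
  by_cases hb1 : 1 ≤ x b
  · exact Or.inr (Or.inl hb1)
  have ha : x a = 1 / 2 := by rcases hhalf a with h | h | h <;> linarith [hhalf b]
  have hb : x b = 1 / 2 := by rcases hhalf b with h | h | h <;> linarith
  by_cases haU : a ∈ U
  · exact Or.inr (Or.inr ⟨hb, fun hbU => hU haU hbU hab⟩)
  · exact Or.inl (Or.inr ⟨ha, haU⟩)

lemma sum_le_sum_mul_sum_inter (hc : ∀ v, 0 ≤ c v) {y : Finset V → ℝ}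
    (hy : IsFracColoring G y) (A : Finset V) :
    ∑ v ∈ A, c v ≤ ∑ U, y U * ∑ v ∈ A ∩ U, c v := by
  calc ∑ v ∈ A, c v ≤ ∑ v ∈ A, c v * ∑ U, if v ∈ U then y U else 0 :=
        sum_le_sum fun v _ => le_mul_of_one_le_right (hc v) (hy.2.2 v)
    _ = ∑ U, y U * ∑ v ∈ A ∩ U, c v := by
        simp_rw [← filter_mem_eq_inter, sum_filter, mul_sum]
        rw [sum_comm]
        refine sum_congr rfl fun U _ => sum_congr rfl fun v _ => ?_
        split_ifs <;> ring

lemma mul_ipVal_le_of_halfIntegral (hc : ∀ v, 0 ≤ c v) {y : Finset V → ℝ}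
    (hy : IsFracColoring G y) (ht : 2 ≤ ∑ U, y U) {x : V → ℝ} (hx : x ∈ lpPoly G)
    (hhalf : ∀ v, x v = 0 ∨ x v = 1 / 2 ∨ 1 ≤ x v) :
    (∑ U, y U) * ipVal G c ≤ 2 * (∑ U, y U - 1) * ∑ v, c v * x v := by
  set t := ∑ U, y U
  set V₁ : Finset V := {v | 1 ≤ x v}
  set V₂ : Finset V := {v | x v = 1 / 2}
  have hdisj : Disjoint V₁ V₂ := disjoint_filter.mpr fun v _ h1 h2 => by linarith
  have hround : ∀ U, y U * ipVal G c ≤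
      y U * (∑ v ∈ V₁, c v + ∑ v ∈ V₂, c v - ∑ v ∈ V₂ ∩ U, c v) := by
    intro U
    by_cases hyU : y U = 0
    · simp [hyU]
    rw [← sum_union_sdiff_of_disjoint hdisj]
    exact mul_le_mul_of_nonneg_left
      (ipVal_le G c (isVC_union_sdiff G hx hhalf (hy.2.1 U hyU))) (hy.1 U)
  have havg : t * ipVal G c ≤ t * (∑ v ∈ V₁, c v + ∑ v ∈ V₂, c v) - ∑ v ∈ V₂, c v := by
    calc t * ipVal G c = ∑ U, y U * ipVal G c := sum_mul ..
      _ ≤ ∑ U, y U * (∑ v ∈ V₁, c v + ∑ v ∈ V₂, c v - ∑ v ∈ V₂ ∩ U, c v) :=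
          sum_le_sum fun U _ => hround U
      _ = t * (∑ v ∈ V₁, c v + ∑ v ∈ V₂, c v) - ∑ U, y U * ∑ v ∈ V₂ ∩ U, c v := by
          simp only [mul_sub, sum_sub_distrib, t, sum_mul]
      _ ≤ _ := by linarith [sum_le_sum_mul_sum_inter G hc hy V₂]
  have hlp : ∑ v ∈ V₁, c v + (∑ v ∈ V₂, c v) / 2 ≤ ∑ v, c v * x v := by
    calc ∑ v ∈ V₁, c v + (∑ v ∈ V₂, c v) / 2
        ≤ ∑ v ∈ V₁, c v * x v + ∑ v ∈ V₂, c v * x v := by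
          gcongr with v hv v hv
          · exact le_mul_of_one_le_right (hc v) (mem_filter.mp hv).2
          · rw [sum_div]
            exact le_of_eq (sum_congr rfl fun v hv => by rw [(mem_filter.mp hv).2]; ring)
      _ = ∑ v ∈ V₁ ∪ V₂, c v * x v := (sum_union hdisj).symm
      _ ≤ ∑ v, c v * x v :=
          sum_le_univ_sum_of_nonneg fun v => mul_nonneg (hc v) (hx.1 v)
  have hV₁ : 0 ≤ ∑ v ∈ V₁, c v := sum_nonneg fun v _ => hc v
  nlinarith [mul_le_mul_of_nonneg_left hlp (by linarith : (0 : ℝ) ≤ 2 * (t - 1))]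

lemma mul_ipVal_le_mul_lpVal (hE : ∃ u v, G.Adj u v) (hc : ∀ v, 0 ≤ c v)
    {y : Finset V → ℝ} (hy : IsFracColoring G y) :
    (∑ U, y U) * ipVal G c ≤ 2 * (∑ U, y U - 1) * lpVal G c := by
  have ht := two_le_sum_of_isFracColoring G hE hy
  have hpos : (0 : ℝ) < 2 * (∑ U, y U - 1) := by linarith
  rw [mul_comm _ (lpVal G c), ← div_le_iff₀ hpos]
  refine le_lpVal G c fun x hx => ?_
  obtain ⟨x', hx', hhalf, hcost⟩ := exists_halfIntegral_le c hx
  rw [div_le_iff₀ hpos]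
  linarith [mul_ipVal_le_of_halfIntegral G hc hy ht hx' hhalf,
    mul_le_mul_of_nonneg_left hcost hpos.le]

lemma fracChrom_mul_ipVal_le (hE : ∃ u v, G.Adj u v) (hc : ∀ v, 0 ≤ c v) :
    fracChrom G * ipVal G c ≤ 2 * (fracChrom G - 1) * lpVal G c := by
  have := le_fracChrom_mul G (p := 2 * lpVal G c) (q := 2 * lpVal G c - ipVal G c)
    fun y hy => by linarith [mul_ipVal_le_mul_lpVal G hE hc hy]
  linarith

end UpperBound

def IsFracClique {V : Type*} (G : SimpleGraph V) (c : V → ℝ) : Prop :=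
  (∀ v, 0 ≤ c v) ∧ ∀ U : Finset V, IsIndep G ↑U → ∑ v ∈ U, c v ≤ 1

lemma StrongDual.apply_eq_sum_mul_single {ι : Type*} [Fintype ι] [DecidableEq ι]
    (f : StrongDual ℝ (ι → ℝ)) (x : ι → ℝ) : f x = ∑ i, x i * f (Pi.single i 1) := by
  have hsingle : ∀ i, (Pi.single i 1 : ι → ℝ) = fun j => if i = j then 1 else 0 :=
    fun i => funext fun j => by simp [Pi.single_apply, eq_comm]
  simpa [hsingle] using f.toLinearMap.pi_apply_eq_sum_univ x

section LowerBound

variable {V : Type*} [Fintype V] [DecidableEq V] (G : SimpleGraph V)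

open Classical in
noncomputable def indepCover : (Finset V → ℝ) →ₗ[ℝ] V → ℝ :=
  Fintype.linearCombination ℝ fun U v => if IsIndep G ↑U ∧ v ∈ U then 1 else 0

lemma indepCover_single {U : Finset V} (hU : IsIndep G ↑U) :
    indepCover G (Pi.single U 1) = fun v => if v ∈ U then 1 else 0 := by
  ext v
  simp [indepCover, Fintype.linearCombination_apply_single, hU]

lemma fracChrom_le_of_one_le_mul_indepCover {μ : Finset V → ℝ} (hμ : μ ∈ stdSimplex ℝ _)
    {t : ℝ} (ht : 0 ≤ t) (hcover : ∀ v, 1 ≤ t * indepCover G μ v) : fracChrom G ≤ t := by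
  classical
  let y : Finset V → ℝ := fun U => if IsIndep G ↑U then t * μ U else 0
  have hy : IsFracColoring G y := by
    refine ⟨fun U => ?_, fun U hU => ?_, fun v => (hcover v).trans_eq ?_⟩
    · by_cases hU : IsIndep G ↑U
      · simpa [y, hU] using mul_nonneg ht (hμ.1 U)
      · simp [y, hU]
    · by_contra h
      exact hU (by simp [y, h])
    · simp only [indepCover, Fintype.linearCombination_apply, Finset.sum_apply, Pi.smul_apply,
        smul_eq_mul, mul_sum]
      refine sum_congr rfl fun U _ => ?_
      by_cases hU : IsIndep G ↑U <;> by_cases hv : v ∈ U <;> simp [y, hU, hv]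
  calc fracChrom G ≤ ∑ U, y U := fracChrom_le_sum G hy
    _ ≤ ∑ U, t * μ U := sum_le_sum fun U _ => by
        by_cases hU : IsIndep G ↑U
        · simp [y, hU]
        · simpa [y, hU] using mul_nonneg ht (hμ.1 U)
    _ = t := by rw [← mul_sum, hμ.2, mul_one]

open scoped Pointwise in
lemma exists_separating_functional {t : ℝ} (ht : 0 < t) (htχ : t < fracChrom G) :
    ∃ (f : StrongDual ℝ (V → ℝ)) (u : ℝ), (∀ w ≤ 0, f w < u) ∧
      (∀ U : Finset V, IsIndep G ↑U → f (t • fun v => if v ∈ U then 1 else 0) < u) ∧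
      u < f 1 := by
  let A := t • indepCover G
  -- `1 ∈ K` would be a fractional coloring of weight at most `t`.
  let K : Set (V → ℝ) := A '' stdSimplex ℝ (Finset V) + Set.Iic 0
  have hK : ∀ μ ∈ stdSimplex ℝ (Finset V), ∀ w ≤ 0, A μ + w ∈ K := fun μ hμ w hw =>
    Set.add_mem_add (Set.mem_image_of_mem _ hμ) hw
  have hone : (1 : V → ℝ) ∉ K := by
    rintro ⟨_, ⟨μ, hμ, rfl⟩, w, hw, hsum⟩
    refine htχ.not_ge (fracChrom_le_of_one_le_mul_indepCover G hμ ht.le fun v => ?_)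
    have hv := congrFun hsum v
    have hwv : w v ≤ 0 := Set.mem_Iic.mp hw v
    simp only [A, Pi.add_apply, LinearMap.smul_apply, Pi.smul_apply, smul_eq_mul,
      Pi.one_apply] at hv
    linarith
  obtain ⟨f, u, hfK, hfu⟩ := geometric_hahn_banach_closed_point
    (((convex_stdSimplex ℝ _).linear_image A).add (convex_Iic 0))
    (isClosed_Iic.add_left_of_isCompact
      ((isCompact_stdSimplex ℝ (Finset V)).image A.continuous_of_finiteDimensional))
    hone
  have hAsingle : ∀ U : Finset V, IsIndep G ↑U →
      A (Pi.single U 1) = t • fun v => if v ∈ U then 1 else 0 :=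
    fun U hU => by simp only [A, LinearMap.smul_apply, indepCover_single G hU]
  refine ⟨f, u, fun w hw => ?_, fun U hU => ?_, hfu⟩
  · have hw' := hK _ (single_mem_stdSimplex ℝ ∅) w hw
    rw [hAsingle ∅ (by simp [IsIndep])] at hw'
    simpa [← Pi.zero_def] using hfK _ hw'
  · have hU' := hK _ (single_mem_stdSimplex ℝ U) 0 le_rfl
    rw [hAsingle U hU, add_zero] at hU'
    exact hfK _ hU'

lemma exists_isFracClique_lt_sum {t : ℝ} (ht : 0 < t) (htχ : t < fracChrom G) :
    ∃ c, IsFracClique G c ∧ t < ∑ v, c v := by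
  obtain ⟨f, u, hnonpos, hindep, hone⟩ := exists_separating_functional G ht htχ
  have hu : 0 < u := by simpa using hnonpos 0 le_rfl
  have hf_nonneg : ∀ v, 0 ≤ f (Pi.single v 1) := fun v => by
    by_contra! hv
    have := hnonpos ((u / f (Pi.single v 1)) • Pi.single v 1)
      (smul_nonpos_of_nonpos_of_nonneg (div_neg_of_pos_of_neg hu hv).le
        (Pi.single_nonneg.mpr zero_le_one))
    rw [map_smul, smul_eq_mul, div_mul_cancel₀ _ hv.ne] at this
    exact lt_irrefl _ this
  refine ⟨fun v => t * f (Pi.single v 1) / u,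
    ⟨fun v => div_nonneg (mul_nonneg ht.le (hf_nonneg v)) hu.le, fun U hU => ?_⟩, ?_⟩
  · have := hindep U hU
    rw [map_smul, StrongDual.apply_eq_sum_mul_single] at this
    rw [← sum_div, div_le_one hu, ← mul_sum]
    refine le_of_lt (lt_of_eq_of_lt ?_ this)
    simp [sum_ite_mem]
  · have := StrongDual.apply_eq_sum_mul_single f 1
    rw [← sum_div, lt_div_iff₀ hu, ← mul_sum]
    simp only [Pi.one_apply, one_mul] at this
    nlinarith

lemma sum_sub_one_le_ipVal {c : V → ℝ} (hc : IsFracClique G c) :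
    ∑ v, c v - 1 ≤ ipVal G c := by
  refine le_ipVal G c fun S hS => ?_
  have hindep : IsIndep G ↑(Sᶜ) := fun a ha b hb hab => by
    rw [coe_compl, Set.mem_compl_iff, mem_coe] at ha hb
    exact (hS hab).elim ha hb
  linarith [sum_add_sum_compl S c, hc.2 _ hindep]

lemma exists_lt_ipVal_div_lpVal (hE : ∃ u v, G.Adj u v) {w : ℝ}
    (hw : w < 2 - 2 / fracChrom G) :
    ∃ c : V → ℝ, (∀ v, 0 ≤ c v) ∧ 0 < lpVal G c ∧ w < ipVal G c / lpVal G c := by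
  have hχ := two_le_fracChrom G hE
  have hw2 : w < 2 := by linarith [div_pos two_pos (by linarith : (0 : ℝ) < fracChrom G)]
  have hwχ : 2 / (2 - w) < fracChrom G := by
    rw [lt_sub_comm, div_lt_iff₀ (by linarith)] at hw
    rw [div_lt_iff₀ (by linarith)]
    linarith
  obtain ⟨t, ht, htχ⟩ := exists_between (max_lt (by linarith : (1 : ℝ) < fracChrom G) hwχ)
  rw [max_lt_iff, div_lt_iff₀ (by linarith)] at ht
  obtain ⟨c, hc, htc⟩ := exists_isFracClique_lt_sum G (by linarith) htχ
  have hip := sum_sub_one_le_ipVal G hc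
  have hlp := lpVal_le_half_sum G c hc.1
  have hlp_pos : 0 < lpVal G c := by
    nlinarith [fracChrom_mul_ipVal_le G hE hc.1]
  refine ⟨c, hc.1, hlp_pos, (lt_div_iff₀ hlp_pos).mpr ?_⟩
  rcases le_or_gt w 0 with hw0 | hw0
  · nlinarith
  · nlinarith [mul_le_mul_of_nonneg_left hlp hw0.le]

end LowerBound

/-- Main theorem: the integrality gap of the vertex cover LP relaxation equals
`2 - 2/χ^f(G)`. -/
theorem stmt7 {V : Type*} [Fintype V] [DecidableEq V] (G : SimpleGraph V)
    (hE : ∃ u v, G.Adj u v) :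
    gap G = 2 - 2 / fracChrom G := by
  have hχ := two_le_fracChrom G hE
  refine csSup_eq_of_forall_le_of_forall_lt_exists_gt ?_ ?_ fun w hw => ?_
  · obtain ⟨c, hc, hlp, -⟩ := exists_lt_ipVal_div_lpVal G hE (sub_one_lt _)
    exact ⟨_, c, hc, hlp, rfl⟩
  · rintro _ ⟨c, hc, hlp, rfl⟩
    have hratio : (2 - 2 / fracChrom G) * lpVal G c =
        2 * (fracChrom G - 1) * lpVal G c / fracChrom G := by
      field_simp
    rw [div_le_iff₀ hlp, hratio, le_div_iff₀ (by linarith)]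
    linarith [fracChrom_mul_ipVal_le G hE hc]
  · obtain ⟨c, hc, hlp, hwc⟩ := exists_lt_ipVal_div_lpVal G hE hw
    exact ⟨_, ⟨c, hc, hlp, rfl⟩, hwc⟩
end

section
/- If G is a finite graph with chromatic number χ(G) ≤ k, then the vertex cover LP integrality gap satisfies ρ(G) ≤ 2 − 2/k. In particular, for planar graphs ρ(G) ≤ 3/2. -/
open Finset

/-! Fix a proper colouring with `k ≥ 2` colours and a fractional vertex cover `x`. For a threshold
`b ∈ (0, 1/2]` and a colour `j`, the vertices of colour `j` with `x v > 1 - b` together with all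
other vertices with `x v ≥ b` form a vertex cover: an edge has at most one endpoint of colour `j`,
and `x u + x v ≥ 1`. Average the cost of these `k` covers over `b` uniform in `(0, 1/2]`: vertex `v`
is charged `2 c v / k` times the length of `(0, 1/2] ∩ (1 - x v, ∞)` plus `k - 1` times that of
`(0, 1/2] ∩ (-∞, x v]`, which is at most `(2 - 2/k) x v c v`.
With fewer than two colours the graph has no edges and the empty cover is optimal. -/

open MeasureTheory Set

section VertexCover

variable {V : Type*} [Fintype V] [DecidableEq V] {G : SimpleGraph V} {c : V → ℝ}

lemma ipVal_le_sum_of_isVC (hc : ∀ v, 0 ≤ c v) {S : Finset V} (hS : IsVC G ↑S) :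
    ipVal G c ≤ ∑ v ∈ S, c v :=
  csInf_le ⟨0, by rintro _ ⟨T, -, rfl⟩; exact Finset.sum_nonneg fun v _ => hc v⟩ ⟨S, hS, rfl⟩

lemma ipVal_nonpos_of_eq_bot (hc : ∀ v, 0 ≤ c v) (hG : G = ⊥) : ipVal G c ≤ 0 := by
  subst hG
  simpa using ipVal_le_sum_of_isVC (S := ∅) hc fun _ _ h => absurd h (by simp)

lemma ipVal_le_mul_lpVal {r : ℝ} (hr : 0 < r)
    (h : ∀ x ∈ lpPoly G, ipVal G c ≤ r * ∑ v, c v * x v) : ipVal G c ≤ r * lpVal G c := by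
  have hne : {t | ∃ x ∈ lpPoly G, t = ∑ v, c v * x v}.Nonempty :=
    ⟨_, fun _ => 1, ⟨fun _ => zero_le_one, fun _ _ _ => by norm_num⟩, rfl⟩
  rw [← div_le_iff₀' hr]
  exact le_csInf hne fun _ ⟨x, hx, ht⟩ => ht ▸ (div_le_iff₀' hr).2 (h x hx)

end VertexCover

lemma Fintype.sum_ite_eq_add_card_sub_one_mul {α M : Type*} [Fintype α] [DecidableEq α]
    [CommRing M] (i : α) (p q : M) :
    ∑ j, (if i = j then p else q) = p + (Fintype.card α - 1) * q := by
  have h : ∀ j, (if i = j then p else q) = q + if i = j then p - q else 0 := fun j => by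
    split_ifs <;> abel
  simp only [h, Finset.sum_add_distrib, Fintype.sum_ite_eq, Finset.sum_const, Finset.card_univ,
    nsmul_eq_mul]
  ring

lemma setIntegral_Ioc_indicator_Ioi_const (a b t r : ℝ) :
    ∫ s in Ioc a b, (Ioi t).indicator (fun _ => r) s = max (b - max a t) 0 * r := by
  rw [integral_indicator_const _ measurableSet_Ioi, measureReal_restrict_apply measurableSet_Ioi,
    inter_comm, Ioc_inter_Ioi, Real.volume_real_Ioc, smul_eq_mul]

lemma setIntegral_Ioc_indicator_Iic_const (a b t r : ℝ) :
    ∫ s in Ioc a b, (Iic t).indicator (fun _ => r) s = max (min b t - a) 0 * r := by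
  rw [integral_indicator_const _ measurableSet_Iic, measureReal_restrict_apply measurableSet_Iic,
    inter_comm, Ioc_inter_Iic, Real.volume_real_Ioc, smul_eq_mul]

lemma max_half_sub_add_mul_max_min_le {K t : ℝ} (hK : 1 ≤ K) (ht : 0 ≤ t) :
    max (1 / 2 - max 0 (1 - t)) 0 + K * max (min (1 / 2) t) 0 ≤ K * t := by
  rw [max_eq_left (le_min (by norm_num) ht)]
  rcases le_total t (1 / 2) with h | h
  · rw [min_eq_right h, max_eq_right (by linarith : (0 : ℝ) ≤ 1 - t),
      max_eq_right (by linarith : 1 / 2 - (1 - t) ≤ 0)]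
    linarith
  rw [min_eq_left h]
  rcases le_total t 1 with h' | h'
  · rw [max_eq_right (by linarith : (0 : ℝ) ≤ 1 - t),
      max_eq_left (by linarith : 0 ≤ 1 / 2 - (1 - t))]
    nlinarith
  · rw [max_eq_left (by linarith : 1 - t ≤ 0), max_eq_left (by norm_num : (0 : ℝ) ≤ 1 / 2 - 0)]
    nlinarith

section ThresholdRounding

variable {V α : Type*} [Fintype V] [DecidableEq α] {G : SimpleGraph V}

noncomputable def thresholdCover (x : V → ℝ) (col : V → α) (j : α) (b : ℝ) : Finset V :=
  {v | if col v = j then 1 - x v < b else b ≤ x v}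

lemma mem_thresholdCover {x : V → ℝ} {col : V → α} {j : α} {b : ℝ} {v : V} :
    v ∈ thresholdCover x col j b ↔ if col v = j then 1 - x v < b else b ≤ x v := by
  simp [thresholdCover]

lemma isVC_thresholdCover {x : V → ℝ} (hx : x ∈ lpPoly G) (col : G.Coloring α) (j : α) {b : ℝ}
    (hb : b ≤ 1 / 2) : IsVC G ↑(thresholdCover x col j b) := by
  intro u v huv
  have hcol : col u ≠ col v := col.valid huv
  have hsum := hx.2 huv
  simp only [Finset.mem_coe, mem_thresholdCover]
  by_cases hu : col u = j <;> by_cases hv : col v = j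
  · exact absurd (hu.trans hv.symm) hcol
  all_goals simp only [hu, hv, if_true, if_false]
  · by_cases h : 1 - x u < b
    · exact .inl h
    · exact .inr (by linarith)
  · by_cases h : 1 - x v < b
    · exact .inr h
    · exact .inl (by linarith)
  · by_cases h : b ≤ x u
    · exact .inl h
    · exact .inr (by linarith)

lemma sum_sum_thresholdCover [Fintype α] (x c : V → ℝ) (col : V → α) (b : ℝ) :
    ∑ j, ∑ v ∈ thresholdCover x col j b, c v =
      ∑ v, ((Ioi (1 - x v)).indicator (fun _ => c v) b +
        (Fintype.card α - 1) * (Iic (x v)).indicator (fun _ => c v) b) := by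
  simp only [Finset.sum_filter, thresholdCover]
  rw [Finset.sum_comm]
  refine Finset.sum_congr rfl fun v _ => ?_
  rw [← Fintype.sum_ite_eq_add_card_sub_one_mul (col v)]
  refine Finset.sum_congr rfl fun j _ => ?_
  split_ifs <;> simp_all

lemma card_mul_ipVal_le_sum_indicator [Fintype α] [DecidableEq V] {c x : V → ℝ}
    (hc : ∀ v, 0 ≤ c v) (hx : x ∈ lpPoly G) (col : G.Coloring α) {b : ℝ} (hb : b ≤ 1 / 2) :
    Fintype.card α * ipVal G c ≤
      ∑ v, ((Ioi (1 - x v)).indicator (fun _ => c v) b +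
        (Fintype.card α - 1) * (Iic (x v)).indicator (fun _ => c v) b) := by
  rw [← sum_sum_thresholdCover x c col b, ← nsmul_eq_mul, ← Finset.card_univ, ← Finset.sum_const]
  exact Finset.sum_le_sum fun j _ => ipVal_le_sum_of_isVC hc (isVC_thresholdCover hx col j hb)

lemma ipVal_le_of_mem_lpPoly [Fintype α] [DecidableEq V] {c x : V → ℝ}
    (hα : 2 ≤ Fintype.card α) (col : G.Coloring α) (hc : ∀ v, 0 ≤ c v) (hx : x ∈ lpPoly G) :
    ipVal G c ≤ (2 - 2 / Fintype.card α) * ∑ v, c v * x v := by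
  have hk : (2 : ℝ) ≤ Fintype.card α := by exact_mod_cast hα
  set k : ℝ := ((Fintype.card α : ℕ) : ℝ)
  have hint : ∀ v, Integrable (fun b => (Ioi (1 - x v)).indicator (fun _ => c v) b +
      (k - 1) * (Iic (x v)).indicator (fun _ => c v) b) (volume.restrict (Ioc (0 : ℝ) (1 / 2))) :=
    fun v => ((integrable_const _).indicator measurableSet_Ioi).add
      (((integrable_const _).indicator measurableSet_Iic).const_mul _)
  have hlow : 1 / 2 * (k * ipVal G c) ≤ ∫ b in Ioc (0 : ℝ) (1 / 2), ∑ v,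
      ((Ioi (1 - x v)).indicator (fun _ => c v) b +
        (k - 1) * (Iic (x v)).indicator (fun _ => c v) b) := by
    simpa using setIntegral_ge_of_const_le measurableSet_Ioc measure_Ioc_lt_top.ne
      (fun b hb => card_mul_ipVal_le_sum_indicator hc hx col hb.2)
      (integrable_finsetSum _ fun v _ => hint v)
  have hvertex : ∀ v, ∫ b in Ioc (0 : ℝ) (1 / 2), ((Ioi (1 - x v)).indicator (fun _ => c v) b +
      (k - 1) * (Iic (x v)).indicator (fun _ => c v) b) ≤ (k - 1) * x v * c v := fun v => by
    rw [integral_add ((integrable_const _).indicator measurableSet_Ioi)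
      (((integrable_const _).indicator measurableSet_Iic).const_mul _), integral_const_mul,
      setIntegral_Ioc_indicator_Ioi_const, setIntegral_Ioc_indicator_Iic_const, sub_zero,
      ← mul_assoc, ← add_mul]
    exact mul_le_mul_of_nonneg_right
      (max_half_sub_add_mul_max_min_le (K := k - 1) (by linarith) (hx.1 v)) (hc v)
  rw [integral_finsetSum _ fun v _ => hint v] at hlow
  calc ipVal G c = 2 / k * (1 / 2 * (k * ipVal G c)) := by field_simp
    _ ≤ 2 / k * ∑ v, (k - 1) * x v * c v := by
      gcongr
      exact hlow.trans (Finset.sum_le_sum fun v _ => hvertex v)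
    _ = (2 - 2 / k) * ∑ v, c v * x v := by
      simp_rw [mul_assoc, ← Finset.mul_sum, mul_comm (x _)]
      field_simp

end ThresholdRounding

/-- If `G` is `k`-colorable then the vertex cover LP integrality gap is at most
`2 - 2/k`; in particular it is at most `3/2` for `4`-colorable (e.g. planar) graphs. -/
theorem stmt13 {V : Type*} [Fintype V] [DecidableEq V] (G : SimpleGraph V)
    (k : ℕ) (hk : G.Colorable k) :
    gap G ≤ 2 - 2 / (k : ℝ) := by
  have hfactor : 0 ≤ 2 - 2 / (k : ℝ) := by
    rcases k.eq_zero_or_pos with rfl | hk0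
    · norm_num
    · linarith [div_le_self zero_le_two (Nat.one_le_cast.2 hk0 : (1 : ℝ) ≤ k)]
  refine Real.sSup_le ?_ hfactor
  rintro _ ⟨c, hc, hlp, rfl⟩
  rw [div_le_iff₀ hlp]
  rcases lt_or_ge k 2 with hk1 | hk2
  · have hG : G = ⊥ := SimpleGraph.colorable_one_iff.1 (hk.mono (by omega))
    exact (ipVal_nonpos_of_eq_bot hc hG).trans (mul_nonneg hfactor hlp.le)
  · obtain ⟨col⟩ := hk
    have hpos : 0 < 2 - 2 / (k : ℝ) := by
      have : (2 : ℝ) ≤ k := by exact_mod_cast hk2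
      linarith [div_le_one_of_le₀ this (by positivity : (0 : ℝ) ≤ k)]
    exact ipVal_le_mul_lpVal hpos fun x hx => by
      simpa using ipVal_le_of_mem_lpPoly (by simpa using hk2) col hc hx
end
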